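/- For every 2-form B ∈ Λ²W*, the pairing ⟨·,·⟩ is invariant under the B-field transformation ρ ↦ exp(B) ∧ ρ: for all ρ, τ ∈ Λ*W*, ⟨exp(B) ∧ ρ, exp(B) ∧ τ⟩ = ⟨ρ, τ⟩, where exp(B) = Σ_{k≥0} B^{∧k}/k! (a finite sum in Λ*W*). -/

import Mathlib

set_option synthInstance.maxHeartbeats 400000
set_option maxHeartbeats 1000000

open Module

/-- The `hat` involution on `Λ*W*`, acting on the degree-`p` component as
multiplication by `(−1)^{p(p+1)/2}`. -/
noncomputable def genHat (W : Type*) [AddCommGroup W] [Module ℝ W] :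
    ExteriorAlgebra ℝ (Module.Dual ℝ W) →ₗ[ℝ] ExteriorAlgebra ℝ (Module.Dual ℝ W) :=
  (DirectSum.toModule ℝ ℕ _ fun p =>
      ((-1 : ℝ) ^ (p * (p + 1) / 2)) • (⋀[ℝ]^p (Module.Dual ℝ W)).subtype) ∘ₗ
    (DirectSum.decomposeLinearEquiv fun i : ℕ => ⋀[ℝ]^i (Module.Dual ℝ W)).toLinearMap

/-- The pairing `⟨ρ, τ⟩`: the degree-`n` component of `ρ ∧ hat(τ)`. -/
noncomputable def genPairing (W : Type*) [AddCommGroup W] [Module ℝ W] (n : ℕ)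
    (ρ τ : ExteriorAlgebra ℝ (Module.Dual ℝ W)) : ExteriorAlgebra ℝ (Module.Dual ℝ W) :=
  GradedAlgebra.proj (fun i : ℕ => ⋀[ℝ]^i (Module.Dual ℝ W)) n (ρ * genHat W τ)

open Finset

/-! A 2-form `B` is central and nilpotent in `Λ*W*`, so `exp B` is a unit with inverse `exp (-B)`.
Since `hat` acts on degree `2k + q` by `(-1)^k (-1)^{q(q+1)/2}`, it turns `B^k ∧ τ` into
`(-B)^k ∧ hat τ`, hence `exp B ∧ τ` into `exp (-B) ∧ hat τ`. By centrality,
`exp B ∧ ρ ∧ hat (exp B ∧ τ) = exp B ∧ exp (-B) ∧ ρ ∧ hat τ = ρ ∧ hat τ`. -/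

theorem IsNilpotent.exp_eq_sum_inv_factorial_smul (𝕜 : Type*) {A : Type*} [Field 𝕜] [CharZero 𝕜]
    [Ring A] [Module 𝕜 A] [Module ℚ A] {a : A} {k : ℕ} (h : a ^ k = 0) :
    IsNilpotent.exp a = ∑ i ∈ range k, ((i.factorial : 𝕜))⁻¹ • a ^ i := by
  rw [IsNilpotent.exp_eq_sum h]
  refine sum_congr rfl fun i _ => ?_
  rw [← Rat.cast_smul_eq_qsmul 𝕜]
  push_cast
  rfl

theorem IsNilpotent.commute_exp_left {A : Type*} [Ring A] [Module ℚ A] {a b : A}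
    (h : Commute a b) : Commute (IsNilpotent.exp a) b :=
  Commute.sum_left _ _ _ fun i _ => (h.pow_left i).smul_left _

theorem neg_one_pow_triangle_add_two_mul {R : Type*} [Monoid R] [HasDistribNeg R] (q k : ℕ) :
    (-1 : R) ^ ((q + 2 * k) * (q + 2 * k + 1) / 2) = (-1) ^ k * (-1) ^ (q * (q + 1) / 2) := by
  have hq : q * (q + 1) = 2 * (q * (q + 1) / 2) :=
    (Nat.two_mul_div_two_of_even (Nat.even_mul_succ_self q)).symm
  have hdiv : (q + 2 * k) * (q + 2 * k + 1) / 2 = k * (2 * (q + k) + 1) + q * (q + 1) / 2 := by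
    rw [Nat.div_eq_iff_eq_mul_left two_pos (Nat.even_mul_succ_self _).two_dvd]
    linear_combination hq
  rw [hdiv, pow_add, pow_mul', (odd_two_mul_add_one (q + k)).neg_one_pow]

namespace ExteriorAlgebra

variable {R M : Type*} [CommRing R] [AddCommGroup M] [Module R M]

theorem commute_of_mem_exteriorPower_two {x : ExteriorAlgebra R M} (hx : x ∈ ⋀[R]^2 M)
    (y : ExteriorAlgebra R M) : Commute x y := by
  rw [exteriorPower, pow_two] at hx
  induction hx using Submodule.mul_induction_on' generalizing y with
  | mem_mul_mem u hu v hv =>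
    obtain ⟨u, rfl⟩ := hu
    obtain ⟨v, rfl⟩ := hv
    have anticomm (a b : M) : ι R a * ι R b = -(ι R b * ι R a) :=
      eq_neg_of_add_eq_zero_left (ι_add_mul_swap a b)
    induction y using ExteriorAlgebra.induction with
    | algebraMap r => exact (Algebra.commutes r _).symm
    | ι w =>
      change _ = _
      rw [mul_assoc, anticomm v w, mul_neg, ← mul_assoc, anticomm u w, neg_mul, neg_neg, mul_assoc]
    | mul a b ha hb => exact ha.mul_right hb
    | add a b ha hb => exact ha.add_right hb
  | add a _ b _ ha hb => exact (ha y).add_left (hb y)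

theorem pow_mem_exteriorPower_two {x : ExteriorAlgebra R M} (hx : x ∈ ⋀[R]^2 M) (k : ℕ) :
    x ^ k ∈ ⋀[R]^(2 * k) M := by
  simpa [smul_eq_mul, mul_comm] using SetLike.pow_mem_graded k hx

end ExteriorAlgebra

theorem exteriorPower_eq_bot_of_finrank_lt {K V : Type*} [Field K] [AddCommGroup V] [Module K V]
    [FiniteDimensional K V] {m : ℕ} (hm : Module.finrank K V < m) : ⋀[K]^m V = ⊥ :=
  Submodule.finrank_eq_zero.mp <| by
    rw [exteriorPower.finrank_eq, Nat.choose_eq_zero_of_lt hm]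

theorem pow_eq_zero_of_mem_exteriorPower_two {K V : Type*} [Field K] [AddCommGroup V]
    [Module K V] [FiniteDimensional K V] {x : ExteriorAlgebra K V} (hx : x ∈ ⋀[K]^2 V) {k : ℕ}
    (hk : Module.finrank K V < 2 * k) : x ^ k = 0 := by
  simpa [exteriorPower_eq_bot_of_finrank_lt hk] using
    ExteriorAlgebra.pow_mem_exteriorPower_two hx k

section Hat

variable {W : Type*} [AddCommGroup W] [Module ℝ W]

theorem genHat_apply_of_mem {m : ℕ} {z : ExteriorAlgebra ℝ (Module.Dual ℝ W)}
    (hz : z ∈ ⋀[ℝ]^m (Module.Dual ℝ W)) :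
    genHat W z = ((-1 : ℝ) ^ (m * (m + 1) / 2)) • z := by
  rw [genHat, LinearMap.comp_apply, LinearEquiv.coe_toLinearMap,
    DirectSum.decomposeLinearEquiv_apply,
    DirectSum.decompose_of_mem (fun i : ℕ => ⋀[ℝ]^i (Module.Dual ℝ W)) hz,
    ← DirectSum.lof_eq_of ℝ, DirectSum.toModule_lof]
  rfl

theorem genHat_pow_mul {B : ExteriorAlgebra ℝ (Module.Dual ℝ W)}
    (hB : B ∈ ⋀[ℝ]^2 (Module.Dual ℝ W)) (k : ℕ) (τ : ExteriorAlgebra ℝ (Module.Dual ℝ W)) :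
    genHat W (B ^ k * τ) = (-B) ^ k * genHat W τ := by
  induction τ using DirectSum.Decomposition.inductionOn
    (ℳ := fun i : ℕ => ⋀[ℝ]^i (Module.Dual ℝ W)) with
  | zero => simp
  | @homogeneous q z =>
    have hBkz : B ^ k * (z : ExteriorAlgebra ℝ (Module.Dual ℝ W)) ∈
        ⋀[ℝ]^(q + 2 * k) (Module.Dual ℝ W) := by
      rw [add_comm]
      exact SetLike.mul_mem_graded (ExteriorAlgebra.pow_mem_exteriorPower_two hB k) z.2
    rw [genHat_apply_of_mem hBkz, genHat_apply_of_mem z.2, neg_one_pow_triangle_add_two_mul,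
      mul_smul, mul_smul_comm, ← neg_one_smul ℝ B, smul_pow, smul_mul_assoc]
    exact smul_comm _ _ _
  | add a b ha hb => rw [mul_add, map_add, ha, hb, map_add, mul_add]

theorem genHat_exp_mul {B : ExteriorAlgebra ℝ (Module.Dual ℝ W)}
    (hB : B ∈ ⋀[ℝ]^2 (Module.Dual ℝ W)) {N : ℕ} (hBN : B ^ N = 0)
    (τ : ExteriorAlgebra ℝ (Module.Dual ℝ W)) :
    genHat W (IsNilpotent.exp B * τ) = IsNilpotent.exp (-B) * genHat W τ := by
  have hBN' : (-B) ^ N = 0 := by rw [neg_pow, hBN, mul_zero]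
  rw [IsNilpotent.exp_eq_sum hBN, IsNilpotent.exp_eq_sum hBN', sum_mul, sum_mul, map_sum]
  refine sum_congr rfl fun k _ => ?_
  rw [smul_mul_assoc, smul_mul_assoc, map_rat_smul, genHat_pow_mul hB]

end Hat

/-- The pairing `⟨·,·⟩` is invariant under `B`-field transformations:
for every 2-form `B ∈ Λ²W*`, and all `ρ, τ`, `⟨exp(B) ∧ ρ, exp(B) ∧ τ⟩ = ⟨ρ, τ⟩`, where
`exp(B) = Σ_k B^{∧k}/k!` (the sum is finite: `B^{∧k} = 0` for `2k > n`, so the terms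
with `k ≤ n` already exhaust it). -/
theorem genPairing_B_field_invariant (n : ℕ) (W : Type*) [AddCommGroup W] [Module ℝ W]
    [FiniteDimensional ℝ W] (hn : Module.finrank ℝ W = n)
    (B : ExteriorAlgebra ℝ (Module.Dual ℝ W)) (hB : B ∈ ⋀[ℝ]^2 (Module.Dual ℝ W))
    (ρ τ : ExteriorAlgebra ℝ (Module.Dual ℝ W)) :
    genPairing W n ((∑ k ∈ Finset.range (n + 1), ((k.factorial : ℝ))⁻¹ • B ^ k) * ρ)
        ((∑ k ∈ Finset.range (n + 1), ((k.factorial : ℝ))⁻¹ • B ^ k) * τ) =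
      genPairing W n ρ τ := by
  have hBn : B ^ (n + 1) = 0 :=
    pow_eq_zero_of_mem_exteriorPower_two hB (by rw [Subspace.dual_finrank_eq, hn]; omega)
  have hρ : Commute (IsNilpotent.exp (-B)) ρ :=
    IsNilpotent.commute_exp_left (ExteriorAlgebra.commute_of_mem_exteriorPower_two hB ρ).neg_left
  rw [← IsNilpotent.exp_eq_sum_inv_factorial_smul ℝ hBn, genPairing, genPairing,
    genHat_exp_mul hB hBn, mul_assoc, ← mul_assoc ρ, ← hρ.eq, mul_assoc, ← mul_assoc,
    IsNilpotent.exp_mul_exp_neg_self ⟨_, hBn⟩, one_mul]
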